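/- arXiv:2111.14577 — 6 statements merged into one kernel-verified Lean document; each statement's English description precedes it below -/
import Mathlib

section
/- For the Iwasawa model, define the fundamental 2-form ω(X, Y) := ⟨IX, Y⟩ and the Chevalley–Eilenberg differential dω(X, Y, Z) := −ω(μ(X,Y), Z) + ω(μ(X,Z), Y) − ω(μ(Y,Z), X). Then for every X ∈ ℝ⁶ one has Σ_{k=0}^{2} dω(e_{2k}, e_{2k+1}, X) = 0; i.e. dω is a primitive 3-form, equivalently the invariant Hermitian metrics on the Iwasawa threefold modeled by μ are balanced in the sense of Michelsohn (dω² = 0). -/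
open scoped RealInnerProductSpace

/-- The standard basis of `ℝ⁶`. -/
noncomputable def e6 (i : Fin 6) : EuclideanSpace ℝ (Fin 6) :=
  EuclideanSpace.single i 1


lemma e6_sum (X : EuclideanSpace ℝ (Fin 6)) : X = ∑ j : Fin 6, X j • e6 j := by
  ext i
  rw [WithLp.ofLp_sum, Fintype.sum_apply]
  simp [e6, EuclideanSpace.single_apply, Finset.sum_ite_eq']

/-- For the Iwasawa model, with the fundamental `2`-form
`ω(X, Y) = ⟨IX, Y⟩` and Chevalley–Eilenberg differential
`dω(X,Y,Z) = −ω(μ(X,Y),Z) + ω(μ(X,Z),Y) − ω(μ(Y,Z),X)`, one has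
`Σ_{k=0}^{2} dω(e_{2k}, e_{2k+1}, X) = 0` for every `X`; i.e. `dω` is primitive,
equivalently the modeled invariant Hermitian metrics are balanced. -/
theorem stmt_10 (α : ℝ) (hα : 0 < α)
    (μ : EuclideanSpace ℝ (Fin 6) →ₗ[ℝ]
      EuclideanSpace ℝ (Fin 6) →ₗ[ℝ] EuclideanSpace ℝ (Fin 6))
    (hμalt : ∀ X, μ X X = 0)
    (h02 : μ (e6 0) (e6 2) = α • e6 4)
    (h03 : μ (e6 0) (e6 3) = α • e6 5)
    (h12 : μ (e6 1) (e6 2) = α • e6 5)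
    (h13 : μ (e6 1) (e6 3) = -(α • e6 4))
    (hzero : ∀ i j : Fin 6, i < j →
      (i, j) ≠ (0, 2) → (i, j) ≠ (0, 3) → (i, j) ≠ (1, 2) → (i, j) ≠ (1, 3) →
      μ (e6 i) (e6 j) = 0)
    (I : EuclideanSpace ℝ (Fin 6) →ₗ[ℝ] EuclideanSpace ℝ (Fin 6))
    (hI0 : I (e6 0) = e6 1) (hI1 : I (e6 1) = -e6 0)
    (hI2 : I (e6 2) = e6 3) (hI3 : I (e6 3) = -e6 2)
    (hI4 : I (e6 4) = e6 5) (hI5 : I (e6 5) = -e6 4) :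
    let ω : EuclideanSpace ℝ (Fin 6) → EuclideanSpace ℝ (Fin 6) → ℝ :=
      fun X Y => ⟪I X, Y⟫
    let dω : EuclideanSpace ℝ (Fin 6) → EuclideanSpace ℝ (Fin 6) →
        EuclideanSpace ℝ (Fin 6) → ℝ :=
      fun X Y Z => -ω (μ X Y) Z + ω (μ X Z) Y - ω (μ Y Z) X
    ∀ X : EuclideanSpace ℝ (Fin 6),
      dω (e6 0) (e6 1) X + dω (e6 2) (e6 3) X + dω (e6 4) (e6 5) X = 0 := by
  intro ω dω X
  have hanti : ∀ A B, μ B A = -μ A B := by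
    intro A B
    have h := hμalt (A + B)
    simp only [map_add, LinearMap.add_apply, hμalt, zero_add, add_zero] at h
    exact eq_neg_of_add_eq_zero_left h
  have h01 : μ (e6 0) (e6 1) = 0 := hzero 0 1 (by decide) (by decide) (by decide) (by decide) (by decide)
  have h04 : μ (e6 0) (e6 4) = 0 := hzero 0 4 (by decide) (by decide) (by decide) (by decide) (by decide)
  have h05 : μ (e6 0) (e6 5) = 0 := hzero 0 5 (by decide) (by decide) (by decide) (by decide) (by decide)
  have h14 : μ (e6 1) (e6 4) = 0 := hzero 1 4 (by decide) (by decide) (by decide) (by decide) (by decide)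
  have h15 : μ (e6 1) (e6 5) = 0 := hzero 1 5 (by decide) (by decide) (by decide) (by decide) (by decide)
  have h23 : μ (e6 2) (e6 3) = 0 := hzero 2 3 (by decide) (by decide) (by decide) (by decide) (by decide)
  have h24 : μ (e6 2) (e6 4) = 0 := hzero 2 4 (by decide) (by decide) (by decide) (by decide) (by decide)
  have h25 : μ (e6 2) (e6 5) = 0 := hzero 2 5 (by decide) (by decide) (by decide) (by decide) (by decide)
  have h34 : μ (e6 3) (e6 4) = 0 := hzero 3 4 (by decide) (by decide) (by decide) (by decide) (by decide)
  have h35 : μ (e6 3) (e6 5) = 0 := hzero 3 5 (by decide) (by decide) (by decide) (by decide) (by decide)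
  have h45 : μ (e6 4) (e6 5) = 0 := hzero 4 5 (by decide) (by decide) (by decide) (by decide) (by decide)
  have h20 : μ (e6 2) (e6 0) = -(α • e6 4) := by rw [hanti, h02]
  have h30 : μ (e6 3) (e6 0) = -(α • e6 5) := by rw [hanti, h03]
  have h21 : μ (e6 2) (e6 1) = -(α • e6 5) := by rw [hanti, h12]
  have h31 : μ (e6 3) (e6 1) = α • e6 4 := by rw [hanti, h13]; simp
  have h10 : μ (e6 1) (e6 0) = 0 := by rw [hanti, h01]; simp
  have h32 : μ (e6 3) (e6 2) = 0 := by rw [hanti, h23]; simp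
  have h54 : μ (e6 5) (e6 4) = 0 := by rw [hanti, h45]; simp
  have h40 : μ (e6 4) (e6 0) = 0 := by rw [hanti, h04]; simp
  have h50 : μ (e6 5) (e6 0) = 0 := by rw [hanti, h05]; simp
  have h41 : μ (e6 4) (e6 1) = 0 := by rw [hanti, h14]; simp
  have h51 : μ (e6 5) (e6 1) = 0 := by rw [hanti, h15]; simp
  have h42 : μ (e6 4) (e6 2) = 0 := by rw [hanti, h24]; simp
  have h52 : μ (e6 5) (e6 2) = 0 := by rw [hanti, h25]; simp
  have h43 : μ (e6 4) (e6 3) = 0 := by rw [hanti, h34]; simp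
  have h53 : μ (e6 5) (e6 3) = 0 := by rw [hanti, h35]; simp
  have hee : ∀ i j : Fin 6, ⟪e6 i, e6 j⟫ = if i = j then (1:ℝ) else 0 := by
    intro i j
    simp [e6, EuclideanSpace.inner_single_left, EuclideanSpace.single_apply, eq_comm]
  rw [e6_sum X]
  simp only [ω, dω, map_sum, map_add, map_smul, smul_zero, inner_add_left, inner_add_right, inner_sum, sum_inner, real_inner_smul_left,
    real_inner_smul_right, Fin.sum_univ_six, LinearMap.smul_apply, LinearMap.sum_apply,
    hμalt, h01, h02, h03, h04, h05, h10, h12, h13, h14, h15, h20, h21, h23, h24, h25,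
    h30, h31, h32, h34, h35, h40, h41, h42, h43, h45, h50, h51, h52, h53, h54,
    map_zero, map_neg, smul_neg, neg_smul, inner_zero_left, inner_zero_right,
    inner_neg_left, inner_neg_right, hI0, hI1, hI2, hI3, hI4, hI5, hee]
  simp
end

section
/- For the Iwasawa model, the Chern connection is flat: with A¹ denoting the Gauduchon operator at parameter t = 1, one has [A¹(X), A¹(Y)] + A¹(μ(X, Y)) = 0 for all X, Y ∈ ℝ⁶, i.e. the Chern curvature Ω¹(X, Y) := −[A¹(X), A¹(Y)] − A¹(μ(X, Y)) vanishes identically. -/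
open scoped RealInnerProductSpace

private lemma fval3 : ((3:Fin 6):ℕ) = 3 := rfl
private lemma fval4 : ((4:Fin 6):ℕ) = 4 := rfl
private lemma fval5 : ((5:Fin 6):ℕ) = 5 := rfl

private lemma basis_expand (X : EuclideanSpace ℝ (Fin 6)) :
    X = X 0 • e6 0 + X 1 • e6 1 + X 2 • e6 2 + X 3 • e6 3 + X 4 • e6 4 + X 5 • e6 5 := by
  ext k
  simp only [e6, PiLp.add_apply, PiLp.smul_apply, EuclideanSpace.single_apply, smul_eq_mul]
  fin_cases k <;> norm_num [Fin.ext_iff, fval3, fval4, fval5] <;> rfl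

private lemma hip (u v : EuclideanSpace ℝ (Fin 6)) :
    ⟪u, v⟫ = u 0 * v 0 + u 1 * v 1 + u 2 * v 2 + u 3 * v 3 + u 4 * v 4 + u 5 * v 5 := by
  simp [PiLp.inner_apply, RCLike.inner_apply, conj_trivial, Fin.sum_univ_six]
  ring

private lemma comb0 (c0 c1 c2 c3 c4 c5 : ℝ) :
    (c0 • e6 0 + c1 • e6 1 + c2 • e6 2 + c3 • e6 3 + c4 • e6 4 + c5 • e6 5
      : EuclideanSpace ℝ (Fin 6)) 0 = c0 := by
  simp only [e6, PiLp.add_apply, PiLp.smul_apply, EuclideanSpace.single_apply, smul_eq_mul]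
  norm_num [Fin.ext_iff, fval3, fval4, fval5]

private lemma comb1 (c0 c1 c2 c3 c4 c5 : ℝ) :
    (c0 • e6 0 + c1 • e6 1 + c2 • e6 2 + c3 • e6 3 + c4 • e6 4 + c5 • e6 5
      : EuclideanSpace ℝ (Fin 6)) 1 = c1 := by
  simp only [e6, PiLp.add_apply, PiLp.smul_apply, EuclideanSpace.single_apply, smul_eq_mul]
  norm_num [Fin.ext_iff, fval3, fval4, fval5]

private lemma comb2 (c0 c1 c2 c3 c4 c5 : ℝ) :
    (c0 • e6 0 + c1 • e6 1 + c2 • e6 2 + c3 • e6 3 + c4 • e6 4 + c5 • e6 5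
      : EuclideanSpace ℝ (Fin 6)) 2 = c2 := by
  simp only [e6, PiLp.add_apply, PiLp.smul_apply, EuclideanSpace.single_apply, smul_eq_mul]
  norm_num [Fin.ext_iff, fval3, fval4, fval5]

private lemma comb3 (c0 c1 c2 c3 c4 c5 : ℝ) :
    (c0 • e6 0 + c1 • e6 1 + c2 • e6 2 + c3 • e6 3 + c4 • e6 4 + c5 • e6 5
      : EuclideanSpace ℝ (Fin 6)) 3 = c3 := by
  simp only [e6, PiLp.add_apply, PiLp.smul_apply, EuclideanSpace.single_apply, smul_eq_mul]
  norm_num [Fin.ext_iff, fval3, fval4, fval5]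

private lemma comb4 (c0 c1 c2 c3 c4 c5 : ℝ) :
    (c0 • e6 0 + c1 • e6 1 + c2 • e6 2 + c3 • e6 3 + c4 • e6 4 + c5 • e6 5
      : EuclideanSpace ℝ (Fin 6)) 4 = c4 := by
  simp only [e6, PiLp.add_apply, PiLp.smul_apply, EuclideanSpace.single_apply, smul_eq_mul]
  norm_num [Fin.ext_iff, fval3, fval4, fval5]

private lemma comb5 (c0 c1 c2 c3 c4 c5 : ℝ) :
    (c0 • e6 0 + c1 • e6 1 + c2 • e6 2 + c3 • e6 3 + c4 • e6 4 + c5 • e6 5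
      : EuclideanSpace ℝ (Fin 6)) 5 = c5 := by
  simp only [e6, PiLp.add_apply, PiLp.smul_apply, EuclideanSpace.single_apply, smul_eq_mul]
  norm_num [Fin.ext_iff, fval3, fval4, fval5]

private lemma ip45 (a b : ℝ) (W : EuclideanSpace ℝ (Fin 6)) :
    ⟪a • e6 4 + b • e6 5, W⟫ = a * W 4 + b * W 5 := by
  rw [hip]
  simp only [e6, PiLp.add_apply, PiLp.smul_apply, EuclideanSpace.single_apply, smul_eq_mul]
  norm_num [Fin.ext_iff, fval3, fval4, fval5]



/-- For the Iwasawa model, the Chern connection is flat: with `A¹` the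
Gauduchon operator at `t = 1`, one has `[A¹(X), A¹(Y)] + A¹(μ(X,Y)) = 0` for all
`X, Y`, i.e. the Chern curvature `Ω¹(X,Y) = −[A¹(X),A¹(Y)] − A¹(μ(X,Y))` vanishes. -/
theorem stmt_11 (α : ℝ) (hα : 0 < α)
    (μ : EuclideanSpace ℝ (Fin 6) →ₗ[ℝ]
      EuclideanSpace ℝ (Fin 6) →ₗ[ℝ] EuclideanSpace ℝ (Fin 6))
    (hμalt : ∀ X, μ X X = 0)
    (h02 : μ (e6 0) (e6 2) = α • e6 4)
    (h03 : μ (e6 0) (e6 3) = α • e6 5)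
    (h12 : μ (e6 1) (e6 2) = α • e6 5)
    (h13 : μ (e6 1) (e6 3) = -(α • e6 4))
    (hzero : ∀ i j : Fin 6, i < j →
      (i, j) ≠ (0, 2) → (i, j) ≠ (0, 3) → (i, j) ≠ (1, 2) → (i, j) ≠ (1, 3) →
      μ (e6 i) (e6 j) = 0)
    (I : EuclideanSpace ℝ (Fin 6) →ₗ[ℝ] EuclideanSpace ℝ (Fin 6))
    (hI0 : I (e6 0) = e6 1) (hI1 : I (e6 1) = -e6 0)
    (hI2 : I (e6 2) = e6 3) (hI3 : I (e6 3) = -e6 2)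
    (hI4 : I (e6 4) = e6 5) (hI5 : I (e6 5) = -e6 4)
    -- the Levi-Civita operator `S^μ`
    (S : EuclideanSpace ℝ (Fin 6) →
      (EuclideanSpace ℝ (Fin 6) →ₗ[ℝ] EuclideanSpace ℝ (Fin 6)))
    (hS : ∀ X Y Z, ⟪S X Y, Z⟫ =
      -(1 / 2) * ⟪μ X Y, Z⟫ - (1 / 2) * ⟪μ Z X, Y⟫ - (1 / 2) * ⟪μ Z Y, X⟫)
    -- the `3`-form `F^μ`
    (F : EuclideanSpace ℝ (Fin 6) → EuclideanSpace ℝ (Fin 6) →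
      EuclideanSpace ℝ (Fin 6) → ℝ)
    (hF : ∀ X Y Z, F X Y Z =
      -⟪μ (I X) (I Y), Z⟫ - ⟪μ (I Y) (I Z), X⟫ - ⟪μ (I Z) (I X), Y⟫)
    -- the Gauduchon operator `A^t` (integrable case)
    (A : ℝ → EuclideanSpace ℝ (Fin 6) →
      (EuclideanSpace ℝ (Fin 6) →ₗ[ℝ] EuclideanSpace ℝ (Fin 6)))
    (hA : ∀ (t : ℝ) (X Y Z : EuclideanSpace ℝ (Fin 6)),
      ⟪A t X Y, Z⟫ = ⟪S X Y, Z⟫ + ((t + 1) / 4) * F X (I Y) (I Z)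
        + ((t - 1) / 4) * F X Y Z) :
    ∀ X Y : EuclideanSpace ℝ (Fin 6),
      (A 1 X) ∘ₗ (A 1 Y) - (A 1 Y) ∘ₗ (A 1 X) + A 1 (μ X Y) = 0 := by
  have hanti : ∀ U V : EuclideanSpace ℝ (Fin 6), μ V U = -μ U V := by
    intro U V
    have h := hμalt (U + V)
    simp only [map_add, LinearMap.add_apply, hμalt, zero_add, add_zero] at h
    exact eq_neg_of_add_eq_zero_left h
  have hμv : ∀ X Y : EuclideanSpace ℝ (Fin 6), μ X Y =
      (α * (X 0 * Y 2 - X 2 * Y 0 - X 1 * Y 3 + X 3 * Y 1)) • e6 4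
      + (α * (X 0 * Y 3 - X 3 * Y 0 + X 1 * Y 2 - X 2 * Y 1)) • e6 5 := by
    intro X Y
    have m00 : μ (e6 0) (e6 0) = 0 := hμalt _
    have m01 : μ (e6 0) (e6 1) = 0 := hzero 0 1 (by decide) (by decide) (by decide) (by decide) (by decide)
    have m04 : μ (e6 0) (e6 4) = 0 := hzero 0 4 (by decide) (by decide) (by decide) (by decide) (by decide)
    have m05 : μ (e6 0) (e6 5) = 0 := hzero 0 5 (by decide) (by decide) (by decide) (by decide) (by decide)
    have m10 : μ (e6 1) (e6 0) = 0 := by rw [hanti, m01, neg_zero]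
    have m11 : μ (e6 1) (e6 1) = 0 := hμalt _
    have m14 : μ (e6 1) (e6 4) = 0 := hzero 1 4 (by decide) (by decide) (by decide) (by decide) (by decide)
    have m15 : μ (e6 1) (e6 5) = 0 := hzero 1 5 (by decide) (by decide) (by decide) (by decide) (by decide)
    have m20 : μ (e6 2) (e6 0) = -(μ (e6 0) (e6 2)) := hanti _ _
    have m21 : μ (e6 2) (e6 1) = -(μ (e6 1) (e6 2)) := hanti _ _
    have m22 : μ (e6 2) (e6 2) = 0 := hμalt _
    have m23 : μ (e6 2) (e6 3) = 0 := hzero 2 3 (by decide) (by decide) (by decide) (by decide) (by decide)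
    have m24 : μ (e6 2) (e6 4) = 0 := hzero 2 4 (by decide) (by decide) (by decide) (by decide) (by decide)
    have m25 : μ (e6 2) (e6 5) = 0 := hzero 2 5 (by decide) (by decide) (by decide) (by decide) (by decide)
    have m30 : μ (e6 3) (e6 0) = -(μ (e6 0) (e6 3)) := hanti _ _
    have m31 : μ (e6 3) (e6 1) = -(μ (e6 1) (e6 3)) := hanti _ _
    have m32 : μ (e6 3) (e6 2) = 0 := by rw [hanti, m23, neg_zero]
    have m33 : μ (e6 3) (e6 3) = 0 := hμalt _
    have m34 : μ (e6 3) (e6 4) = 0 := hzero 3 4 (by decide) (by decide) (by decide) (by decide) (by decide)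
    have m35 : μ (e6 3) (e6 5) = 0 := hzero 3 5 (by decide) (by decide) (by decide) (by decide) (by decide)
    have m40 : μ (e6 4) (e6 0) = 0 := by rw [hanti, m04, neg_zero]
    have m41 : μ (e6 4) (e6 1) = 0 := by rw [hanti, m14, neg_zero]
    have m42 : μ (e6 4) (e6 2) = 0 := by rw [hanti, m24, neg_zero]
    have m43 : μ (e6 4) (e6 3) = 0 := by rw [hanti, m34, neg_zero]
    have m44 : μ (e6 4) (e6 4) = 0 := hμalt _
    have m45 : μ (e6 4) (e6 5) = 0 := hzero 4 5 (by decide) (by decide) (by decide) (by decide) (by decide)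
    have m50 : μ (e6 5) (e6 0) = 0 := by rw [hanti, m05, neg_zero]
    have m51 : μ (e6 5) (e6 1) = 0 := by rw [hanti, m15, neg_zero]
    have m52 : μ (e6 5) (e6 2) = 0 := by rw [hanti, m25, neg_zero]
    have m53 : μ (e6 5) (e6 3) = 0 := by rw [hanti, m35, neg_zero]
    have m54 : μ (e6 5) (e6 4) = 0 := by rw [hanti, m45, neg_zero]
    have m55 : μ (e6 5) (e6 5) = 0 := hμalt _
    conv_lhs => rw [basis_expand X, basis_expand Y]
    simp only [map_add, map_smul, LinearMap.add_apply, LinearMap.smul_apply,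
      m00, m01, m04, m05, m10, m11, m14, m15, m20, m21, m22, m23, m24, m25, m30, m31, m32, m33, m34, m35, m40, m41, m42, m43, m44, m45, m50, m51, m52, m53, m54, m55, h02, h03, h12, h13,
      smul_zero, smul_neg, add_zero, zero_add]
    module
  have hIv : ∀ X : EuclideanSpace ℝ (Fin 6), I X =
      (-X 1) • e6 0 + (X 0) • e6 1 + (-X 3) • e6 2 + (X 2) • e6 3
      + (-X 5) • e6 4 + (X 4) • e6 5 := by
    intro X
    conv_lhs => rw [basis_expand X]
    simp only [map_add, map_smul, hI0, hI1, hI2, hI3, hI4, hI5]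
    module
  have hIc0 : ∀ X : EuclideanSpace ℝ (Fin 6), I X 0 = -X 1 := by
    intro X; rw [hIv X, comb0]
  have hIc1 : ∀ X : EuclideanSpace ℝ (Fin 6), I X 1 = X 0 := by
    intro X; rw [hIv X, comb1]
  have hIc2 : ∀ X : EuclideanSpace ℝ (Fin 6), I X 2 = -X 3 := by
    intro X; rw [hIv X, comb2]
  have hIc3 : ∀ X : EuclideanSpace ℝ (Fin 6), I X 3 = X 2 := by
    intro X; rw [hIv X, comb3]
  have hIc4 : ∀ X : EuclideanSpace ℝ (Fin 6), I X 4 = -X 5 := by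
    intro X; rw [hIv X, comb4]
  have hIc5 : ∀ X : EuclideanSpace ℝ (Fin 6), I X 5 = X 4 := by
    intro X; rw [hIv X, comb5]
  have key : ∀ X Y : EuclideanSpace ℝ (Fin 6), A 1 X Y = 0 := by
    intro X Y
    rw [← inner_self_eq_zero (𝕜 := ℝ) (x := A 1 X Y)]
    rw [hA 1 X Y (A 1 X Y), hS X Y (A 1 X Y), hF X (I Y) (I (A 1 X Y)), hF X Y (A 1 X Y)]
    set Z := A 1 X Y with hZ
    rw [hμv X Y, hμv Z X, hμv Z Y, hμv (I X) (I (I Y)), hμv (I (I Y)) (I (I Z)),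
      hμv (I (I Z)) (I X), hμv (I X) (I Y), hμv (I Y) (I Z), hμv (I Z) (I X)]
    simp only [ip45, hIc0, hIc1, hIc2, hIc3, hIc4, hIc5]
    ring
  intro X Y
  apply LinearMap.ext
  intro W
  simp only [LinearMap.add_apply, LinearMap.sub_apply, LinearMap.comp_apply, key,
    map_zero, LinearMap.zero_apply]
  simp [key]
end

section
/- For the Iwasawa model, the first Gauduchon–Ricci form vanishes for every parameter t ∈ ℝ: defining ρ^{t,(1)}(X, Y) := −(1/4) tr(I ∘ Ω^t(X, Y) + I ∘ Ω^t(IX, IY)), one has ρ^{t,(1)}(X, Y) = 0 for all X, Y ∈ ℝ⁶ and all t ∈ ℝ; in particular the Gauduchon scalar curvature scal^t := 2 Σ_{k=0}^{2} ρ^{t,(1)}(e_{2k}, e_{2k+1}) is zero for every t. -/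
open scoped RealInnerProductSpace

/-- Table of values of `μ` on basis vectors. -/
noncomputable def μtab (α : ℝ) : Fin 6 → Fin 6 → EuclideanSpace ℝ (Fin 6)
  | 0, 2 => α • e6 4 | 0, 3 => α • e6 5 | 1, 2 => α • e6 5 | 1, 3 => -(α • e6 4)
  | 2, 0 => -(α • e6 4) | 3, 0 => -(α • e6 5) | 2, 1 => -(α • e6 5) | 3, 1 => α • e6 4
  | _, _ => 0

/-- Table of values of the Gauduchon operator (up to the factor `α (t-1)/2`). -/
noncomputable def ctab : Fin 6 → Fin 6 → EuclideanSpace ℝ (Fin 6)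
  | 0, 2 => e6 4 | 0, 3 => e6 5 | 0, 4 => -e6 2 | 0, 5 => -e6 3
  | 1, 2 => e6 5 | 1, 3 => -e6 4 | 1, 4 => e6 3 | 1, 5 => -e6 2
  | 2, 0 => -e6 4 | 2, 1 => -e6 5 | 2, 4 => e6 0 | 2, 5 => e6 1
  | 3, 0 => -e6 5 | 3, 1 => e6 4 | 3, 4 => -e6 1 | 3, 5 => e6 0
  | _, _ => 0

set_option maxHeartbeats 0 in
/-- For the Iwasawa model, the first Gauduchon–Ricci form
`ρ^{t,(1)}(X,Y) = −(1/4) tr(I ∘ Ω^t(X,Y) + I ∘ Ω^t(IX,IY))` vanishes identically for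
every `t`; in particular the Gauduchon scalar curvature
`scal^t = 2 Σ_k ρ^{t,(1)}(e_{2k}, e_{2k+1})` is zero for every `t`. -/
theorem stmt_12 (α : ℝ) (hα : 0 < α)
    (μ : EuclideanSpace ℝ (Fin 6) →ₗ[ℝ]
      EuclideanSpace ℝ (Fin 6) →ₗ[ℝ] EuclideanSpace ℝ (Fin 6))
    (hμalt : ∀ X, μ X X = 0)
    (h02 : μ (e6 0) (e6 2) = α • e6 4)
    (h03 : μ (e6 0) (e6 3) = α • e6 5)
    (h12 : μ (e6 1) (e6 2) = α • e6 5)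
    (h13 : μ (e6 1) (e6 3) = -(α • e6 4))
    (hzero : ∀ i j : Fin 6, i < j →
      (i, j) ≠ (0, 2) → (i, j) ≠ (0, 3) → (i, j) ≠ (1, 2) → (i, j) ≠ (1, 3) →
      μ (e6 i) (e6 j) = 0)
    (I : EuclideanSpace ℝ (Fin 6) →ₗ[ℝ] EuclideanSpace ℝ (Fin 6))
    (hI0 : I (e6 0) = e6 1) (hI1 : I (e6 1) = -e6 0)
    (hI2 : I (e6 2) = e6 3) (hI3 : I (e6 3) = -e6 2)
    (hI4 : I (e6 4) = e6 5) (hI5 : I (e6 5) = -e6 4)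
    -- the Levi-Civita operator `S^μ`
    (S : EuclideanSpace ℝ (Fin 6) →
      (EuclideanSpace ℝ (Fin 6) →ₗ[ℝ] EuclideanSpace ℝ (Fin 6)))
    (hS : ∀ X Y Z, ⟪S X Y, Z⟫ =
      -(1 / 2) * ⟪μ X Y, Z⟫ - (1 / 2) * ⟪μ Z X, Y⟫ - (1 / 2) * ⟪μ Z Y, X⟫)
    -- the `3`-form `F^μ`
    (F : EuclideanSpace ℝ (Fin 6) → EuclideanSpace ℝ (Fin 6) →
      EuclideanSpace ℝ (Fin 6) → ℝ)
    (hF : ∀ X Y Z, F X Y Z =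
      -⟪μ (I X) (I Y), Z⟫ - ⟪μ (I Y) (I Z), X⟫ - ⟪μ (I Z) (I X), Y⟫)
    -- the Gauduchon operator `A^t` (integrable case)
    (A : ℝ → EuclideanSpace ℝ (Fin 6) →
      (EuclideanSpace ℝ (Fin 6) →ₗ[ℝ] EuclideanSpace ℝ (Fin 6)))
    (hA : ∀ (t : ℝ) (X Y Z : EuclideanSpace ℝ (Fin 6)),
      ⟪A t X Y, Z⟫ = ⟪S X Y, Z⟫ + ((t + 1) / 4) * F X (I Y) (I Z)
        + ((t - 1) / 4) * F X Y Z) :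
    let Ω : ℝ → EuclideanSpace ℝ (Fin 6) → EuclideanSpace ℝ (Fin 6) →
        (EuclideanSpace ℝ (Fin 6) →ₗ[ℝ] EuclideanSpace ℝ (Fin 6)) :=
      fun t X Y => -((A t X) ∘ₗ (A t Y) - (A t Y) ∘ₗ (A t X)) - A t (μ X Y)
    let ρ : ℝ → EuclideanSpace ℝ (Fin 6) → EuclideanSpace ℝ (Fin 6) → ℝ :=
      fun t X Y => -(1 / 4) *
        LinearMap.trace ℝ (EuclideanSpace ℝ (Fin 6))
          (I ∘ₗ Ω t X Y + I ∘ₗ Ω t (I X) (I Y))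
    (∀ (t : ℝ) (X Y : EuclideanSpace ℝ (Fin 6)), ρ t X Y = 0) ∧
    (∀ t : ℝ,
      2 * (ρ t (e6 0) (e6 1) + ρ t (e6 2) (e6 3) + ρ t (e6 4) (e6 5)) = 0) := by
  intro Ω ρ
  have hΩdef : ∀ t X Y, Ω t X Y =
      -((A t X) ∘ₗ (A t Y) - (A t Y) ∘ₗ (A t X)) - A t (μ X Y) := fun _ _ _ => rfl
  have hρdef : ∀ t X Y, ρ t X Y = -(1 / 4) *
      LinearMap.trace ℝ (EuclideanSpace ℝ (Fin 6))
        (I ∘ₗ Ω t X Y + I ∘ₗ Ω t (I X) (I Y)) := fun _ _ _ => rfl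
  -- inner-product helper lemmas
  have i1 : ∀ (a : ℝ) (i k : Fin 6), ⟪a • e6 i, e6 k⟫ = if k = i then a else 0 := by
    intro a i k; simp [e6, EuclideanSpace.single_apply, EuclideanSpace.inner_single_right]
  have i2 : ∀ i k : Fin 6, ⟪e6 i, e6 k⟫ = if k = i then (1:ℝ) else 0 := by
    intro i k; simpa using i1 1 i k
  have m0 : ∀ (h : (0:ℕ) < 6), (⟨0,h⟩ : Fin 6) = 0 := fun _ => rfl
  have m1 : ∀ (h : (1:ℕ) < 6), (⟨1,h⟩ : Fin 6) = 1 := fun _ => rfl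
  have m2 : ∀ (h : (2:ℕ) < 6), (⟨2,h⟩ : Fin 6) = 2 := fun _ => rfl
  have m3 : ∀ (h : (3:ℕ) < 6), (⟨3,h⟩ : Fin 6) = 3 := fun _ => rfl
  have m4 : ∀ (h : (4:ℕ) < 6), (⟨4,h⟩ : Fin 6) = 4 := fun _ => rfl
  have m5 : ∀ (h : (5:ℕ) < 6), (⟨5,h⟩ : Fin 6) = 5 := fun _ => rfl
  have hext : ∀ u v : EuclideanSpace ℝ (Fin 6),
      (∀ k, ⟪u, e6 k⟫ = ⟪v, e6 k⟫) → u = v := by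
    intro u v h
    ext k
    simpa [e6, EuclideanSpace.inner_single_right] using h k
  -- antisymmetry of μ
  have hanti : ∀ X Y, μ X Y = -(μ Y X) := by
    intro X Y
    have h := hμalt (X + Y)
    simp only [map_add, LinearMap.add_apply, hμalt, zero_add, add_zero] at h
    exact eq_neg_of_add_eq_zero_right h
  -- the full table of μ on basis vectors
  have hμb : ∀ i j, μ (e6 i) (e6 j) = μtab α i j := by
    intro i j
    fin_cases i <;> fin_cases j <;> simp only [m0, m1, m2, m3, m4, m5] <;>
      first
        | exact hμalt _
        | exact h02 | exact h03 | exact h12 | exact h13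
        | (rw [hanti, h02]; try rfl) | (rw [hanti, h03]; try rfl)
        | (rw [hanti, h12]; try rfl) | (rw [hanti, h13, neg_neg]; try rfl)
        | (rw [hzero _ _ (by decide) (by decide) (by decide) (by decide) (by decide)]; try rfl)
        | (rw [hanti, hzero _ _ (by decide) (by decide) (by decide) (by decide) (by decide),
            neg_zero]; try rfl)
  -- the table of the Gauduchon operator on basis vectors
  have hAb : ∀ (t : ℝ) (i j : Fin 6),
      A t (e6 i) (e6 j) = (α * (t - 1) / 2) • ctab i j := by
    intro t i j
    fin_cases i <;> fin_cases j <;>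
    · apply hext
      intro k
      fin_cases k <;>
      · simp only [m0, m1, m2, m3, m4, m5]
        rw [hA, hS, hF, hF]
        simp only [hI0, hI1, hI2, hI3, hI4, hI5, map_neg, LinearMap.neg_apply, neg_neg,
          inner_neg_left, inner_neg_right, hμb]
        simp (config := { decide := true }) only [μtab, ctab, i1, i2,
          inner_zero_left, inner_zero_right, inner_neg_left, inner_neg_right,
          real_inner_smul_left]
        norm_num
        try ring
  -- linearity of `A` in its first argument
  have hAad : ∀ (t : ℝ) X X', A t (X + X') = A t X + A t X' := by
    intro t X X'
    apply LinearMap.ext; intro Y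
    apply hext; intro k
    simp only [LinearMap.add_apply, inner_add_left, hA, hS, hF]
    simp only [map_add, LinearMap.add_apply, inner_add_left, inner_add_right]
    ring
  have hAsc : ∀ (t c : ℝ) X, A t (c • X) = c • A t X := by
    intro t c X
    apply LinearMap.ext; intro Y
    apply hext; intro k
    simp only [LinearMap.smul_apply, real_inner_smul_left, hA, hS, hF]
    simp only [map_smul, LinearMap.smul_apply, real_inner_smul_left, real_inner_smul_right]
    ring
  have hAneg : ∀ (t : ℝ) X, A t (-X) = -(A t X) := by
    intro t X
    have := hAsc t (-1) X
    simpa using this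
  have hA0 : ∀ t : ℝ, A t 0 = 0 := by
    intro t
    have := hAsc t 0 0
    simpa using this
  -- trace via the standard orthonormal basis
  have htr : ∀ f : EuclideanSpace ℝ (Fin 6) →ₗ[ℝ] EuclideanSpace ℝ (Fin 6),
      LinearMap.trace ℝ _ f = ∑ k : Fin 6, ⟪f (e6 k), e6 k⟫ := by
    intro f
    rw [LinearMap.trace_eq_matrix_trace ℝ ((EuclideanSpace.basisFun (Fin 6) ℝ).toBasis)]
    simp [Matrix.trace, LinearMap.toMatrix_apply, e6, EuclideanSpace.basisFun_apply,
      Matrix.diag, EuclideanSpace.inner_single_right]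
  -- ρ vanishes on basis pairs
  have hρb : ∀ (t : ℝ) (i j : Fin 6), ρ t (e6 i) (e6 j) = 0 := by
    intro t i j
    rw [hρdef, map_add, htr, htr, Fin.sum_univ_six, Fin.sum_univ_six]
    fin_cases i <;> fin_cases j <;>
    · simp only [m0, m1, m2, m3, m4, m5, hΩdef, hI0, hI1, hI2, hI3, hI4, hI5,
        hAneg, map_neg, LinearMap.neg_apply, LinearMap.comp_apply, LinearMap.sub_apply,
        LinearMap.add_apply, neg_neg, hμb]
      simp (config := { decide := true }) only [μtab, hAsc, hAneg, hA0, hAb, ctab,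
        map_smul, map_neg, map_zero, LinearMap.zero_apply, LinearMap.neg_apply,
        LinearMap.smul_apply, smul_zero, neg_zero, smul_neg, neg_neg, smul_smul,
        hI0, hI1, hI2, hI3, hI4, hI5,
        i1, i2, inner_zero_left, inner_zero_right, inner_neg_left, inner_neg_right,
        real_inner_smul_left, map_add, map_sub, sub_self, sub_zero, zero_sub, neg_sub,
        inner_add_left, inner_sub_left, smul_add, smul_sub]
      norm_num
      try ring
  -- bilinearity of Ω in each slot
  have hΩa1 : ∀ (t : ℝ) X X' Y, Ω t (X + X') Y = Ω t X Y + Ω t X' Y := by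
    intro t X X' Y
    rw [hΩdef, hΩdef, hΩdef, hAad, map_add, LinearMap.add_apply, hAad]
    apply LinearMap.ext; intro v
    simp only [LinearMap.add_apply, LinearMap.sub_apply, LinearMap.neg_apply,
      LinearMap.comp_apply, map_add]
    try abel
  have hΩs1 : ∀ (t c : ℝ) X Y, Ω t (c • X) Y = c • Ω t X Y := by
    intro t c X Y
    rw [hΩdef, hΩdef, hAsc, map_smul, LinearMap.smul_apply, hAsc]
    apply LinearMap.ext; intro v
    simp only [LinearMap.smul_apply, LinearMap.sub_apply, LinearMap.neg_apply,
      LinearMap.comp_apply, map_smul, smul_sub, smul_neg]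
    try abel
  have hΩa2 : ∀ (t : ℝ) X Y Y', Ω t X (Y + Y') = Ω t X Y + Ω t X Y' := by
    intro t X Y Y'
    rw [hΩdef, hΩdef, hΩdef, hAad, map_add, hAad]
    apply LinearMap.ext; intro v
    simp only [LinearMap.add_apply, LinearMap.sub_apply, LinearMap.neg_apply,
      LinearMap.comp_apply, map_add]
    try abel
  have hΩs2 : ∀ (t c : ℝ) X Y, Ω t X (c • Y) = c • Ω t X Y := by
    intro t c X Y
    rw [hΩdef, hΩdef, hAsc, map_smul, hAsc]
    apply LinearMap.ext; intro v
    simp only [LinearMap.smul_apply, LinearMap.sub_apply, LinearMap.neg_apply,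
      LinearMap.comp_apply, map_smul, smul_sub, smul_neg]
    try abel
  -- bilinearity of ρ
  have hρa1 : ∀ (t : ℝ) X X' Y, ρ t (X + X') Y = ρ t X Y + ρ t X' Y := by
    intro t X X' Y
    rw [hρdef, hρdef, hρdef, map_add I, hΩa1, hΩa1]
    simp only [LinearMap.comp_add, map_add]
    ring
  have hρs1 : ∀ (t c : ℝ) X Y, ρ t (c • X) Y = c * ρ t X Y := by
    intro t c X Y
    rw [hρdef, hρdef, map_smul I, hΩs1, hΩs1]
    simp only [LinearMap.comp_smul, map_smul, map_add, smul_eq_mul]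
    ring
  have hρa2 : ∀ (t : ℝ) X Y Y', ρ t X (Y + Y') = ρ t X Y + ρ t X Y' := by
    intro t X Y Y'
    rw [hρdef, hρdef, hρdef, map_add I, hΩa2, hΩa2]
    simp only [LinearMap.comp_add, map_add]
    ring
  have hρs2 : ∀ (t c : ℝ) X Y, ρ t X (c • Y) = c * ρ t X Y := by
    intro t c X Y
    rw [hρdef, hρdef, map_smul I, hΩs2, hΩs2]
    simp only [LinearMap.comp_smul, map_smul, map_add, smul_eq_mul]
    ring
  -- general vanishing via bilinearity
  have main : ∀ (t : ℝ) (X Y : EuclideanSpace ℝ (Fin 6)), ρ t X Y = 0 := by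
    intro t X Y
    let B : EuclideanSpace ℝ (Fin 6) →ₗ[ℝ] EuclideanSpace ℝ (Fin 6) →ₗ[ℝ] ℝ :=
      LinearMap.mk₂ ℝ (ρ t) (fun m₁ m₂ n => hρa1 t m₁ m₂ n)
        (fun c m n => hρs1 t c m n) (fun m n₁ n₂ => hρa2 t m n₁ n₂)
        (fun c m n => hρs2 t c m n)
    have hb : ∀ i : Fin 6, (EuclideanSpace.basisFun (Fin 6) ℝ).toBasis i = e6 i := by
      intro i
      simp [e6, EuclideanSpace.basisFun_apply]
    have hB : B = 0 := by
      apply (EuclideanSpace.basisFun (Fin 6) ℝ).toBasis.ext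
      intro i
      apply (EuclideanSpace.basisFun (Fin 6) ℝ).toBasis.ext
      intro j
      simp only [hb, LinearMap.zero_apply]
      show ρ t (e6 i) (e6 j) = 0
      exact hρb t i j
    have : B X Y = 0 := by rw [hB]; rfl
    exact this
  refine ⟨main, fun t => ?_⟩
  rw [main, main, main]
  ring
end

section
/- For the Iwasawa model, the second Gauduchon–Ricci form is given explicitly as follows. Define the endomorphism E^t := Ω^t(e₀,e₁) + Ω^t(e₂,e₃) + Ω^t(e₄,e₅) and ρ^{t,(2)}(X, Y) := ⟨E^t X, Y⟩. Then ρ^{t,(2)}(e₀,e₁) = ρ^{t,(2)}(e₂,e₃) = α²(t−1)²/2, ρ^{t,(2)}(e₄,e₅) = −α²(t−1)², and ρ^{t,(2)}(e_i, e_j) = 0 for all other pairs i < j. In particular 2(ρ^{t,(2)}(e₀,e₁) + ρ^{t,(2)}(e₂,e₃) + ρ^{t,(2)}(e₄,e₅)) = 0, i.e. the Gauduchon scalar curvature vanishes for every t. -/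
/-!
The Iwasawa bracket is the bracket of the complex Heisenberg algebra: it is complex bilinear for
`I`, and `I` is orthogonal. On such a Hermitian complex Lie algebra the Chern connection `A¹`
vanishes identically, so `A^t X = (t - 1)/2 • (ad X - (ad X)*)`. Since `μ` kills the three
unitary pairs, `E^t` is `-((t - 1)/2)²` times a sum of commutators of these explicit skew
operators, and a direct computation in coordinates gives
`ρ^{t,(2)} = α²(t - 1)² (½ (e⁰¹ + e²³) - e⁴⁵)`.
-/

open scoped RealInnerProductSpace

theorem LinearMap.IsAlt.ext_basis {R M N ι : Type*} [CommRing R] [AddCommGroup M] [Module R M]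
    [AddCommGroup N] [Module R N] [LinearOrder ι] {B B' : M →ₗ[R] M →ₗ[R] N}
    (hB : B.IsAlt) (hB' : B'.IsAlt) (b : Module.Basis ι R M)
    (h : ∀ i j, i < j → B (b i) (b j) = B' (b i) (b j)) : B = B' := by
  refine LinearMap.ext_basis b b fun i j => ?_
  rcases lt_trichotomy i j with hij | rfl | hji
  · exact h i j hij
  · rw [hB, hB']
  · rw [← hB.neg, ← hB'.neg, h j i hji]

def connectionCurvature {V : Type*} [AddCommGroup V] [Module ℝ V] (A : V → V →ₗ[ℝ] V)
    (μ : V →ₗ[ℝ] V →ₗ[ℝ] V) (X Y : V) : V →ₗ[ℝ] V :=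
  -((A X) ∘ₗ (A Y) - (A Y) ∘ₗ (A X)) - A (μ X Y)

structure IsHermitianComplexBracket {V : Type*} [NormedAddCommGroup V] [InnerProductSpace ℝ V]
    (μ : V →ₗ[ℝ] V →ₗ[ℝ] V) (I : V →ₗ[ℝ] V) : Prop where
  I_I : ∀ X, I (I X) = -X
  inner_I_left : ∀ X Y, ⟪I X, Y⟫ = -⟪X, I Y⟫
  isAlt : μ.IsAlt
  apply_I_left : ∀ X Y, μ (I X) Y = I (μ X Y)

namespace IsHermitianComplexBracket

variable {V : Type*} [NormedAddCommGroup V] [InnerProductSpace ℝ V]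
  {μ : V →ₗ[ℝ] V →ₗ[ℝ] V} {I : V →ₗ[ℝ] V}

theorem swap (h : IsHermitianComplexBracket μ I) (X Y : V) : μ Y X = -μ X Y :=
  (h.isAlt.neg X Y).symm

theorem inner_I_I (h : IsHermitianComplexBracket μ I) (X Y : V) : ⟪I X, I Y⟫ = ⟪X, Y⟫ := by
  rw [h.inner_I_left, h.I_I, inner_neg_right, neg_neg]

theorem apply_I_right (h : IsHermitianComplexBracket μ I) (X Y : V) :
    μ X (I Y) = I (μ X Y) := by
  rw [h.swap, h.apply_I_left, ← map_neg, ← h.swap]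

theorem apply_I_I (h : IsHermitianComplexBracket μ I) (X Y : V) :
    μ (I X) (I Y) = -μ X Y := by
  rw [h.apply_I_left, h.apply_I_right, h.I_I]

theorem inner_gauduchon_eq (h : IsHermitianComplexBracket μ I) {S : V → V → V}
    (hS : ∀ X Y Z, ⟪S X Y, Z⟫ =
      -(1 / 2) * ⟪μ X Y, Z⟫ - (1 / 2) * ⟪μ Z X, Y⟫ - (1 / 2) * ⟪μ Z Y, X⟫)
    {F : V → V → V → ℝ}
    (hF : ∀ X Y Z, F X Y Z = -⟪μ (I X) (I Y), Z⟫ - ⟪μ (I Y) (I Z), X⟫ - ⟪μ (I Z) (I X), Y⟫)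
    {A : ℝ → V → V → V}
    (hA : ∀ t X Y Z, ⟪A t X Y, Z⟫ = ⟪S X Y, Z⟫ + ((t + 1) / 4) * F X (I Y) (I Z)
        + ((t - 1) / 4) * F X Y Z) (t : ℝ) (X Y Z : V) :
    ⟪A t X Y, Z⟫ = (t - 1) / 2 * (⟪μ X Y, Z⟫ - ⟪μ X Z, Y⟫) := by
  have hZX : μ Z X = -μ X Z := h.swap X Z
  have hZY : μ Z Y = -μ Y Z := h.swap Y Z
  rw [hA, hS, hF, hF]
  simp only [h.apply_I_I, h.I_I, map_neg, LinearMap.neg_apply, h.apply_I_left, h.apply_I_right,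
    h.inner_I_I, inner_neg_left, hZX, hZY]
  ring

end IsHermitianComplexBracket

section Iwasawa

local notation "𝕍" => EuclideanSpace ℝ (Fin 6)

theorem EuclideanSpace.ext_fin_six {x y : 𝕍} (h0 : x 0 = y 0) (h1 : x 1 = y 1) (h2 : x 2 = y 2)
    (h3 : x 3 = y 3) (h4 : x 4 = y 4) (h5 : x 5 = y 5) : x = y := by
  ext i; fin_cases i <;> assumption

theorem e6_apply (i j : Fin 6) : e6 i j = if j = i then 1 else 0 := by
  simp [e6, PiLp.single_apply]

noncomputable def e6Basis : Module.Basis (Fin 6) ℝ 𝕍 :=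
  (EuclideanSpace.basisFun (Fin 6) ℝ).toBasis

theorem coe_e6Basis : ⇑e6Basis = e6 := by
  funext i; simp [e6Basis, e6]

noncomputable def iwasawaI : 𝕍 →ₗ[ℝ] 𝕍 := by
  refine { toFun := fun x => !₂[-x 1, x 0, -x 3, x 2, -x 5, x 4], map_add' := ?_, map_smul' := ?_ }
    <;> intros <;> apply EuclideanSpace.ext_fin_six
    <;> simp only [PiLp.add_apply, PiLp.smul_apply, smul_eq_mul, RingHom.id_apply,
      Matrix.cons_val_zero, Matrix.cons_val_one, Matrix.cons_val] <;> ring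

/-- In the complex coordinates `z = (x₀ + i x₁, x₂ + i x₃, x₄ + i x₅)` this is the complex
Heisenberg bracket `α (z₁ w₂ - z₂ w₁) ∂₃`. -/
noncomputable def iwasawaBracket (α : ℝ) : 𝕍 →ₗ[ℝ] 𝕍 →ₗ[ℝ] 𝕍 := by
  refine LinearMap.mk₂ ℝ
    (fun x y => α • !₂[0, 0, 0, 0, x 0 * y 2 - x 2 * y 0 - x 1 * y 3 + x 3 * y 1,
      x 0 * y 3 - x 3 * y 0 + x 1 * y 2 - x 2 * y 1]) ?_ ?_ ?_ ?_
    <;> intros <;> apply EuclideanSpace.ext_fin_six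
    <;> simp only [PiLp.add_apply, PiLp.smul_apply, smul_eq_mul,
      Matrix.cons_val_zero, Matrix.cons_val_one, Matrix.cons_val] <;> ring

theorem iwasawaI_apply (x : 𝕍) : iwasawaI x = !₂[-x 1, x 0, -x 3, x 2, -x 5, x 4] := rfl

theorem iwasawaBracket_apply (α : ℝ) (x y : 𝕍) : iwasawaBracket α x y =
    α • !₂[0, 0, 0, 0, x 0 * y 2 - x 2 * y 0 - x 1 * y 3 + x 3 * y 1,
      x 0 * y 3 - x 3 * y 0 + x 1 * y 2 - x 2 * y 1] := rfl

theorem isAlt_iwasawaBracket (α : ℝ) : (iwasawaBracket α).IsAlt := by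
  intro x; apply EuclideanSpace.ext_fin_six <;> simp [iwasawaBracket_apply, mul_comm]

theorem isHermitianComplexBracket_iwasawa (α : ℝ) :
    IsHermitianComplexBracket (iwasawaBracket α) iwasawaI where
  I_I x := by apply EuclideanSpace.ext_fin_six <;> simp [iwasawaI_apply]
  inner_I_left x y := by
    simp only [iwasawaI_apply, PiLp.inner_apply, RCLike.inner_apply, conj_trivial, Fin.sum_univ_six,
      Matrix.cons_val_zero, Matrix.cons_val_one, Matrix.cons_val]
    ring
  isAlt := isAlt_iwasawaBracket α
  apply_I_left x y := by
    apply EuclideanSpace.ext_fin_six <;>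
      simp only [iwasawaI_apply, iwasawaBracket_apply, map_smul, PiLp.smul_apply, smul_eq_mul,
        Matrix.cons_val_zero, Matrix.cons_val_one, Matrix.cons_val] <;>
      ring

theorem eq_iwasawaI {I : 𝕍 →ₗ[ℝ] 𝕍}
    (hI0 : I (e6 0) = e6 1) (hI1 : I (e6 1) = -e6 0)
    (hI2 : I (e6 2) = e6 3) (hI3 : I (e6 3) = -e6 2)
    (hI4 : I (e6 4) = e6 5) (hI5 : I (e6 5) = -e6 4) : I = iwasawaI := by
  refine e6Basis.ext fun i => ?_
  rw [coe_e6Basis]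
  ext k
  fin_cases i <;> fin_cases k <;> simp [hI0, hI1, hI2, hI3, hI4, hI5, iwasawaI_apply, e6_apply]

theorem eq_iwasawaBracket {α : ℝ} {μ : 𝕍 →ₗ[ℝ] 𝕍 →ₗ[ℝ] 𝕍}
    (hμalt : ∀ X, μ X X = 0)
    (h02 : μ (e6 0) (e6 2) = α • e6 4)
    (h03 : μ (e6 0) (e6 3) = α • e6 5)
    (h12 : μ (e6 1) (e6 2) = α • e6 5)
    (h13 : μ (e6 1) (e6 3) = -(α • e6 4))
    (hzero : ∀ i j : Fin 6, i < j →
      (i, j) ≠ (0, 2) → (i, j) ≠ (0, 3) → (i, j) ≠ (1, 2) → (i, j) ≠ (1, 3) →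
      μ (e6 i) (e6 j) = 0) : μ = iwasawaBracket α := by
  refine LinearMap.IsAlt.ext_basis hμalt (isAlt_iwasawaBracket α) e6Basis fun i j hij => ?_
  rw [coe_e6Basis]
  ext k
  fin_cases i <;> fin_cases j <;> fin_cases k <;>
    simp +decide [h02, h03, h12, h13, hzero, iwasawaBracket_apply, e6_apply]
      at hij ⊢

/-- `ad x - (ad x)*` for the Iwasawa bracket. -/
noncomputable def iwasawaSkew (α : ℝ) (x : 𝕍) : 𝕍 →ₗ[ℝ] 𝕍 := by
  refine
    { toFun := fun y => α • !₂[x 2 * y 4 + x 3 * y 5, x 2 * y 5 - x 3 * y 4,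
        -(x 0 * y 4 + x 1 * y 5), x 1 * y 4 - x 0 * y 5,
        x 0 * y 2 - x 2 * y 0 - x 1 * y 3 + x 3 * y 1, x 0 * y 3 - x 3 * y 0 + x 1 * y 2 - x 2 * y 1]
      map_add' := ?_, map_smul' := ?_ }
    <;> intros <;> apply EuclideanSpace.ext_fin_six
    <;> simp only [PiLp.add_apply, PiLp.smul_apply, smul_eq_mul, RingHom.id_apply,
      Matrix.cons_val_zero, Matrix.cons_val_one, Matrix.cons_val] <;> ring

theorem iwasawaSkew_apply (α : ℝ) (x y : 𝕍) : iwasawaSkew α x y =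
    α • !₂[x 2 * y 4 + x 3 * y 5, x 2 * y 5 - x 3 * y 4, -(x 0 * y 4 + x 1 * y 5),
      x 1 * y 4 - x 0 * y 5, x 0 * y 2 - x 2 * y 0 - x 1 * y 3 + x 3 * y 1,
      x 0 * y 3 - x 3 * y 0 + x 1 * y 2 - x 2 * y 1] := rfl

theorem inner_iwasawaSkew (α : ℝ) (x y z : 𝕍) :
    ⟪iwasawaSkew α x y, z⟫ = ⟪iwasawaBracket α x y, z⟫ - ⟪iwasawaBracket α x z, y⟫ := by
  simp only [iwasawaSkew_apply, iwasawaBracket_apply, PiLp.inner_apply, RCLike.inner_apply,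
    conj_trivial, Fin.sum_univ_six, PiLp.smul_apply, smul_eq_mul, Matrix.cons_val_zero,
    Matrix.cons_val_one, Matrix.cons_val]
  ring

theorem inner_sum_curvature_iwasawaSkew (α c : ℝ) (x y : 𝕍) :
    ⟪(connectionCurvature (fun X => c • iwasawaSkew α X) (iwasawaBracket α) (e6 0) (e6 1) +
      connectionCurvature (fun X => c • iwasawaSkew α X) (iwasawaBracket α) (e6 2) (e6 3) +
      connectionCurvature (fun X => c • iwasawaSkew α X) (iwasawaBracket α) (e6 4) (e6 5)) x, y⟫ =
      c ^ 2 * α ^ 2 * (2 * (x 0 * y 1 - x 1 * y 0 + x 2 * y 3 - x 3 * y 2)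
        - 4 * (x 4 * y 5 - x 5 * y 4)) := by
  simp only [connectionCurvature, LinearMap.add_apply, LinearMap.sub_apply, LinearMap.neg_apply,
    LinearMap.comp_apply, LinearMap.smul_apply, iwasawaSkew_apply, iwasawaBracket_apply, e6_apply,
    PiLp.inner_apply, RCLike.inner_apply, conj_trivial, Fin.sum_univ_six, PiLp.add_apply,
    PiLp.sub_apply, PiLp.neg_apply, PiLp.smul_apply, smul_eq_mul, Matrix.cons_val_zero,
    Matrix.cons_val_one, Matrix.cons_val, Fin.isValue, Fin.reduceEq, if_true, if_false]
  ring

end Iwasawa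

theorem stmt_13_general (α : ℝ)
    (μ : EuclideanSpace ℝ (Fin 6) →ₗ[ℝ]
      EuclideanSpace ℝ (Fin 6) →ₗ[ℝ] EuclideanSpace ℝ (Fin 6))
    (hμalt : ∀ X, μ X X = 0)
    (h02 : μ (e6 0) (e6 2) = α • e6 4)
    (h03 : μ (e6 0) (e6 3) = α • e6 5)
    (h12 : μ (e6 1) (e6 2) = α • e6 5)
    (h13 : μ (e6 1) (e6 3) = -(α • e6 4))
    (hzero : ∀ i j : Fin 6, i < j →
      (i, j) ≠ (0, 2) → (i, j) ≠ (0, 3) → (i, j) ≠ (1, 2) → (i, j) ≠ (1, 3) →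
      μ (e6 i) (e6 j) = 0)
    (I : EuclideanSpace ℝ (Fin 6) →ₗ[ℝ] EuclideanSpace ℝ (Fin 6))
    (hI0 : I (e6 0) = e6 1) (hI1 : I (e6 1) = -e6 0)
    (hI2 : I (e6 2) = e6 3) (hI3 : I (e6 3) = -e6 2)
    (hI4 : I (e6 4) = e6 5) (hI5 : I (e6 5) = -e6 4)
    -- the Levi-Civita operator `S^μ`
    (S : EuclideanSpace ℝ (Fin 6) →
      (EuclideanSpace ℝ (Fin 6) →ₗ[ℝ] EuclideanSpace ℝ (Fin 6)))
    (hS : ∀ X Y Z, ⟪S X Y, Z⟫ =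
      -(1 / 2) * ⟪μ X Y, Z⟫ - (1 / 2) * ⟪μ Z X, Y⟫ - (1 / 2) * ⟪μ Z Y, X⟫)
    -- the `3`-form `F^μ`
    (F : EuclideanSpace ℝ (Fin 6) → EuclideanSpace ℝ (Fin 6) →
      EuclideanSpace ℝ (Fin 6) → ℝ)
    (hF : ∀ X Y Z, F X Y Z =
      -⟪μ (I X) (I Y), Z⟫ - ⟪μ (I Y) (I Z), X⟫ - ⟪μ (I Z) (I X), Y⟫)
    -- the Gauduchon operator `A^t` (integrable case)
    (A : ℝ → EuclideanSpace ℝ (Fin 6) →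
      (EuclideanSpace ℝ (Fin 6) →ₗ[ℝ] EuclideanSpace ℝ (Fin 6)))
    (hA : ∀ (t : ℝ) (X Y Z : EuclideanSpace ℝ (Fin 6)),
      ⟪A t X Y, Z⟫ = ⟪S X Y, Z⟫ + ((t + 1) / 4) * F X (I Y) (I Z)
        + ((t - 1) / 4) * F X Y Z) :
    let Ω : ℝ → EuclideanSpace ℝ (Fin 6) → EuclideanSpace ℝ (Fin 6) →
        (EuclideanSpace ℝ (Fin 6) →ₗ[ℝ] EuclideanSpace ℝ (Fin 6)) :=
      fun t X Y => -((A t X) ∘ₗ (A t Y) - (A t Y) ∘ₗ (A t X)) - A t (μ X Y)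
    let Et : ℝ → (EuclideanSpace ℝ (Fin 6) →ₗ[ℝ] EuclideanSpace ℝ (Fin 6)) :=
      fun t => Ω t (e6 0) (e6 1) + Ω t (e6 2) (e6 3) + Ω t (e6 4) (e6 5)
    let ρ₂ : ℝ → EuclideanSpace ℝ (Fin 6) → EuclideanSpace ℝ (Fin 6) → ℝ :=
      fun t X Y => ⟪Et t X, Y⟫
    ∀ t : ℝ,
      ρ₂ t (e6 0) (e6 1) = α ^ 2 * (t - 1) ^ 2 / 2 ∧
      ρ₂ t (e6 2) (e6 3) = α ^ 2 * (t - 1) ^ 2 / 2 ∧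
      ρ₂ t (e6 4) (e6 5) = -(α ^ 2 * (t - 1) ^ 2) ∧
      (∀ i j : Fin 6, i < j →
        (i, j) ≠ (0, 1) → (i, j) ≠ (2, 3) → (i, j) ≠ (4, 5) →
        ρ₂ t (e6 i) (e6 j) = 0) ∧
      2 * (ρ₂ t (e6 0) (e6 1) + ρ₂ t (e6 2) (e6 3) + ρ₂ t (e6 4) (e6 5)) = 0 := by
  intro Ω Et ρ₂ t
  obtain rfl := eq_iwasawaBracket hμalt h02 h03 h12 h13 hzero
  obtain rfl := eq_iwasawaI hI0 hI1 hI2 hI3 hI4 hI5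
  have hAt : (fun X => A t X) = fun X => ((t - 1) / 2) • iwasawaSkew α X := by
    funext X; ext1 Y; refine ext_inner_right ℝ fun Z => ?_
    rw [(isHermitianComplexBracket_iwasawa α).inner_gauduchon_eq hS hF hA, LinearMap.smul_apply,
      real_inner_smul_left, inner_iwasawaSkew]
  have hρ : ∀ X Y, ρ₂ t X Y = α ^ 2 * (t - 1) ^ 2 *
      ((X 0 * Y 1 - X 1 * Y 0 + X 2 * Y 3 - X 3 * Y 2) / 2 - (X 4 * Y 5 - X 5 * Y 4)) := by
    intro X Y
    change ⟪(connectionCurvature (fun X => A t X) _ (e6 0) (e6 1) +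
      connectionCurvature (fun X => A t X) _ (e6 2) (e6 3) +
      connectionCurvature (fun X => A t X) _ (e6 4) (e6 5)) X, Y⟫ = _
    rw [hAt, inner_sum_curvature_iwasawaSkew]
    ring
  have hρ01 : ρ₂ t (e6 0) (e6 1) = α ^ 2 * (t - 1) ^ 2 / 2 := by
    simp [hρ, e6_apply, div_eq_mul_inv]
  have hρ23 : ρ₂ t (e6 2) (e6 3) = α ^ 2 * (t - 1) ^ 2 / 2 := by
    simp [hρ, e6_apply, div_eq_mul_inv]
  have hρ45 : ρ₂ t (e6 4) (e6 5) = -(α ^ 2 * (t - 1) ^ 2) := by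
    simp [hρ, e6_apply]
  refine ⟨hρ01, hρ23, hρ45, fun i j hij h01 h23 h45 => ?_, by rw [hρ01, hρ23, hρ45]; ring⟩
  rw [hρ]
  fin_cases i <;> fin_cases j <;> simp [e6_apply] at hij h01 h23 h45 ⊢

/-- For the Iwasawa model, the second Gauduchon–Ricci form
`ρ^{t,(2)}(X,Y) = ⟨E^t X, Y⟩`, with `E^t = Ω^t(e₀,e₁) + Ω^t(e₂,e₃) + Ω^t(e₄,e₅)`,
satisfies `ρ^{t,(2)}(e₀,e₁) = ρ^{t,(2)}(e₂,e₃) = α²(t−1)²/2`,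
`ρ^{t,(2)}(e₄,e₅) = −α²(t−1)²`, and vanishes on all other pairs `i < j`; in particular
the Gauduchon scalar curvature vanishes for every `t`. -/
theorem stmt_13 (α : ℝ) (hα : 0 < α)
    (μ : EuclideanSpace ℝ (Fin 6) →ₗ[ℝ]
      EuclideanSpace ℝ (Fin 6) →ₗ[ℝ] EuclideanSpace ℝ (Fin 6))
    (hμalt : ∀ X, μ X X = 0)
    (h02 : μ (e6 0) (e6 2) = α • e6 4)
    (h03 : μ (e6 0) (e6 3) = α • e6 5)
    (h12 : μ (e6 1) (e6 2) = α • e6 5)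
    (h13 : μ (e6 1) (e6 3) = -(α • e6 4))
    (hzero : ∀ i j : Fin 6, i < j →
      (i, j) ≠ (0, 2) → (i, j) ≠ (0, 3) → (i, j) ≠ (1, 2) → (i, j) ≠ (1, 3) →
      μ (e6 i) (e6 j) = 0)
    (I : EuclideanSpace ℝ (Fin 6) →ₗ[ℝ] EuclideanSpace ℝ (Fin 6))
    (hI0 : I (e6 0) = e6 1) (hI1 : I (e6 1) = -e6 0)
    (hI2 : I (e6 2) = e6 3) (hI3 : I (e6 3) = -e6 2)
    (hI4 : I (e6 4) = e6 5) (hI5 : I (e6 5) = -e6 4)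
    -- the Levi-Civita operator `S^μ`
    (S : EuclideanSpace ℝ (Fin 6) →
      (EuclideanSpace ℝ (Fin 6) →ₗ[ℝ] EuclideanSpace ℝ (Fin 6)))
    (hS : ∀ X Y Z, ⟪S X Y, Z⟫ =
      -(1 / 2) * ⟪μ X Y, Z⟫ - (1 / 2) * ⟪μ Z X, Y⟫ - (1 / 2) * ⟪μ Z Y, X⟫)
    -- the `3`-form `F^μ`
    (F : EuclideanSpace ℝ (Fin 6) → EuclideanSpace ℝ (Fin 6) →
      EuclideanSpace ℝ (Fin 6) → ℝ)
    (hF : ∀ X Y Z, F X Y Z =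
      -⟪μ (I X) (I Y), Z⟫ - ⟪μ (I Y) (I Z), X⟫ - ⟪μ (I Z) (I X), Y⟫)
    -- the Gauduchon operator `A^t` (integrable case)
    (A : ℝ → EuclideanSpace ℝ (Fin 6) →
      (EuclideanSpace ℝ (Fin 6) →ₗ[ℝ] EuclideanSpace ℝ (Fin 6)))
    (hA : ∀ (t : ℝ) (X Y Z : EuclideanSpace ℝ (Fin 6)),
      ⟪A t X Y, Z⟫ = ⟪S X Y, Z⟫ + ((t + 1) / 4) * F X (I Y) (I Z)
        + ((t - 1) / 4) * F X Y Z) :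
    let Ω : ℝ → EuclideanSpace ℝ (Fin 6) → EuclideanSpace ℝ (Fin 6) →
        (EuclideanSpace ℝ (Fin 6) →ₗ[ℝ] EuclideanSpace ℝ (Fin 6)) :=
      fun t X Y => -((A t X) ∘ₗ (A t Y) - (A t Y) ∘ₗ (A t X)) - A t (μ X Y)
    let Et : ℝ → (EuclideanSpace ℝ (Fin 6) →ₗ[ℝ] EuclideanSpace ℝ (Fin 6)) :=
      fun t => Ω t (e6 0) (e6 1) + Ω t (e6 2) (e6 3) + Ω t (e6 4) (e6 5)
    let ρ₂ : ℝ → EuclideanSpace ℝ (Fin 6) → EuclideanSpace ℝ (Fin 6) → ℝ :=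
      fun t X Y => ⟪Et t X, Y⟫
    ∀ t : ℝ,
      ρ₂ t (e6 0) (e6 1) = α ^ 2 * (t - 1) ^ 2 / 2 ∧
      ρ₂ t (e6 2) (e6 3) = α ^ 2 * (t - 1) ^ 2 / 2 ∧
      ρ₂ t (e6 4) (e6 5) = -(α ^ 2 * (t - 1) ^ 2) ∧
      (∀ i j : Fin 6, i < j →
        (i, j) ≠ (0, 1) → (i, j) ≠ (2, 3) → (i, j) ≠ (4, 5) →
        ρ₂ t (e6 i) (e6 j) = 0) ∧
      2 * (ρ₂ t (e6 0) (e6 1) + ρ₂ t (e6 2) (e6 3) + ρ₂ t (e6 4) (e6 5)) = 0 :=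
  stmt_13_general α μ hμalt h02 h03 h12 h13 hzero I hI0 hI1 hI2 hI3 hI4 hI5 S hS F hF A hA
end

section
/- For the Kodaira model, the complex structure is integrable: μ(IX, IY) − μ(X, Y) = I(μ(IX, Y) + μ(X, IY)) for all X, Y ∈ ℝ⁴ (equivalently, the Nijenhuis tensor N^μ vanishes identically), so the associated locally homogeneous almost-Hermitian structures on the primary Kodaira surface are Hermitian. -/
/-!
Since `μ` is alternating, the Nijenhuis tensor
`N(X, Y) = μ(IX, IY) - μ(X, Y) - I(μ(IX, Y) + μ(X, IY))` is alternating, and since `I² = -1`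
it satisfies `N(IX, Y) = N(X, IY) = -I N(X, Y)`. With respect to the complex basis
`(e₀, Ie₀, e₂, Ie₂)` of `ℝ⁴` it is therefore determined by the single value
`N(e₀, e₂) = μ(e₁, e₃) - μ(e₀, e₂) - I(μ(e₁, e₂) + μ(e₀, e₃))`, and for the Kodaira model
both `μ(e₁, e₃) - μ(e₀, e₂)` and `μ(e₁, e₂) + μ(e₀, e₃)` vanish.
-/

open Submodule

noncomputable def e4 (i : Fin 4) : EuclideanSpace ℝ (Fin 4) :=
  EuclideanSpace.single i 1

section Nijenhuis

variable {R M : Type*} [CommRing R] [AddCommGroup M] [Module R M]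
  (μ : M →ₗ[R] M →ₗ[R] M) (I : M →ₗ[R] M)

def nijenhuis : M →ₗ[R] M →ₗ[R] M :=
  μ.compl₁₂ I I - μ - (μ.comp I + μ.compl₂ I).compr₂ I

variable {μ I}

theorem nijenhuis_apply (X Y : M) :
    nijenhuis μ I X Y = μ (I X) (I Y) - μ X Y - I (μ (I X) Y + μ X (I Y)) := by
  simp [nijenhuis]

theorem nijenhuis_eq_zero_iff :
    nijenhuis μ I = 0 ↔ ∀ X Y, μ (I X) (I Y) - μ X Y = I (μ (I X) Y + μ X (I Y)) := by
  simp only [LinearMap.ext_iff₂, LinearMap.zero_apply, nijenhuis_apply, sub_eq_zero]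

theorem nijenhuis_apply_self (hμ : ∀ X, μ X X = 0) (X : M) : nijenhuis μ I X X = 0 := by
  have hanti : μ (I X) X + μ X (I X) = 0 := by
    simpa [hμ] using hμ (I X + X)
  rw [nijenhuis_apply, hμ, hμ, hanti, map_zero, sub_self, sub_zero]

theorem nijenhuis_swap (hμ : ∀ X, μ X X = 0) (X Y : M) :
    nijenhuis μ I Y X = -nijenhuis μ I X Y := by
  have h := nijenhuis_apply_self (I := I) hμ (X + Y)
  simp only [map_add, LinearMap.add_apply, nijenhuis_apply_self hμ, zero_add, add_zero] at h
  exact eq_neg_of_add_eq_zero_left h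

theorem nijenhuis_apply_left (hI : ∀ X, I (I X) = -X) (X Y : M) :
    nijenhuis μ I (I X) Y = -I (nijenhuis μ I X Y) := by
  simp only [nijenhuis_apply, hI, map_neg, map_sub, map_add, LinearMap.neg_apply]
  abel

theorem nijenhuis_apply_right (hI : ∀ X, I (I X) = -X) (X Y : M) :
    nijenhuis μ I X (I Y) = -I (nijenhuis μ I X Y) := by
  simp only [nijenhuis_apply, hI, map_neg, map_sub, map_add]
  abel

theorem nijenhuis_eq_zero_of_span_eq_top {x y : M}
    (hspan : span R {x, I x, y, I y} = ⊤) (hμ : ∀ X, μ X X = 0)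
    (hI : ∀ X, I (I X) = -X) (hxy : nijenhuis μ I x y = 0) :
    nijenhuis μ I = 0 := by
  have hyx : nijenhuis μ I y x = 0 := by rw [nijenhuis_swap hμ, hxy, neg_zero]
  refine LinearMap.ext_on hspan fun u hu => LinearMap.ext_on hspan fun v hv => ?_
  rcases hu with rfl | rfl | rfl | rfl <;> rcases hv with rfl | rfl | rfl | rfl <;>
    simp only [nijenhuis_apply_left hI, nijenhuis_apply_right hI, nijenhuis_apply_self hμ,
      hxy, hyx, LinearMap.zero_apply, map_zero, neg_zero]

end Nijenhuis

theorem span_e4_eq_top : span ℝ {e4 0, e4 1, e4 2, e4 3} = ⊤ := by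
  have hrange : Set.range e4 = {e4 0, e4 1, e4 2, e4 3} := by
    simp [Set.range, Fin.exists_fin_succ, Set.ext_iff, eq_comm]
  rw [← hrange, ← (EuclideanSpace.basisFun (Fin 4) ℝ).toBasis.span_eq]
  congr 1
  ext i
  simp [e4]

theorem stmt_15_general (r v α β : ℝ)
    (μ : EuclideanSpace ℝ (Fin 4) →ₗ[ℝ]
      EuclideanSpace ℝ (Fin 4) →ₗ[ℝ] EuclideanSpace ℝ (Fin 4))
    (hμalt : ∀ X, μ X X = 0)
    (h02 : μ (e4 0) (e4 2) =
      -(α ^ 2 / v) • e4 0 + (α * β / v) • e4 1 + (α / r) • e4 3)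
    (h03 : μ (e4 0) (e4 3) =
      -(α * β / v) • e4 0 + (β ^ 2 / v) • e4 1 + (β / r) • e4 3)
    (h12 : μ (e4 1) (e4 2) =
      (α * β / v) • e4 0 - (β ^ 2 / v) • e4 1 - (β / r) • e4 3)
    (h13 : μ (e4 1) (e4 3) =
      -(α ^ 2 / v) • e4 0 + (α * β / v) • e4 1 + (α / r) • e4 3)
    (I : EuclideanSpace ℝ (Fin 4) →ₗ[ℝ] EuclideanSpace ℝ (Fin 4))
    (hI0 : I (e4 0) = e4 1) (hI1 : I (e4 1) = -e4 0)
    (hI2 : I (e4 2) = e4 3) (hI3 : I (e4 3) = -e4 2) :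
    ∀ X Y : EuclideanSpace ℝ (Fin 4),
      μ (I X) (I Y) - μ X Y = I (μ (I X) Y + μ X (I Y)) := by
  have hspan : span ℝ {e4 0, I (e4 0), e4 2, I (e4 2)} = ⊤ := by
    rw [hI0, hI2]
    exact span_e4_eq_top
  have hsum : μ (e4 1) (e4 2) + μ (e4 0) (e4 3) = 0 := by
    rw [h12, h03]
    module
  have hN02 : nijenhuis μ I (e4 0) (e4 2) = 0 := by
    rw [nijenhuis_apply, hI0, hI2, h13, h02, sub_self, hsum, map_zero, sub_zero]
  have hI : ∀ X, I (I X) = -X := by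
    have h : I ∘ₗ I = -LinearMap.id := by
      refine LinearMap.ext_on span_e4_eq_top fun u hu => ?_
      rcases hu with rfl | rfl | rfl | rfl <;>
        simp only [LinearMap.comp_apply, LinearMap.neg_apply, LinearMap.id_apply, map_neg,
          hI0, hI1, hI2, hI3]
    exact LinearMap.congr_fun h
  exact nijenhuis_eq_zero_iff.mp (nijenhuis_eq_zero_of_span_eq_top hspan hμalt hI hN02)

/-- For the Kodaira model, the complex structure is integrable:
`μ(IX, IY) − μ(X, Y) = I(μ(IX, Y) + μ(X, IY))` for all `X, Y` (equivalently, the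
Nijenhuis tensor `N^μ` vanishes identically), so the associated locally homogeneous
almost-Hermitian structures on the primary Kodaira surface are Hermitian. -/
theorem stmt_15 (r v α β : ℝ) (hr : 0 < r) (hv : 0 < v)
    (μ : EuclideanSpace ℝ (Fin 4) →ₗ[ℝ]
      EuclideanSpace ℝ (Fin 4) →ₗ[ℝ] EuclideanSpace ℝ (Fin 4))
    (hμalt : ∀ X, μ X X = 0)
    (h01 : μ (e4 0) (e4 1) =
      (α / r) • e4 0 - (β / r) • e4 1 - (v / r ^ 2) • e4 3)
    (h02 : μ (e4 0) (e4 2) =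
      -(α ^ 2 / v) • e4 0 + (α * β / v) • e4 1 + (α / r) • e4 3)
    (h03 : μ (e4 0) (e4 3) =
      -(α * β / v) • e4 0 + (β ^ 2 / v) • e4 1 + (β / r) • e4 3)
    (h12 : μ (e4 1) (e4 2) =
      (α * β / v) • e4 0 - (β ^ 2 / v) • e4 1 - (β / r) • e4 3)
    (h13 : μ (e4 1) (e4 3) =
      -(α ^ 2 / v) • e4 0 + (α * β / v) • e4 1 + (α / r) • e4 3)
    (h23 : μ (e4 2) (e4 3) =
      ((α ^ 2 + β ^ 2) * α * r / v ^ 2) • e4 0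
        - ((α ^ 2 + β ^ 2) * β * r / v ^ 2) • e4 1
        - ((α ^ 2 + β ^ 2) / v) • e4 3)
    (I : EuclideanSpace ℝ (Fin 4) →ₗ[ℝ] EuclideanSpace ℝ (Fin 4))
    (hI0 : I (e4 0) = e4 1) (hI1 : I (e4 1) = -e4 0)
    (hI2 : I (e4 2) = e4 3) (hI3 : I (e4 3) = -e4 2) :
    ∀ X Y : EuclideanSpace ℝ (Fin 4),
      μ (I X) (I Y) - μ X Y = I (μ (I X) Y + μ X (I Y)) :=
  stmt_15_general r v α β μ hμalt h02 h03 h12 h13 I hI0 hI1 hI2 hI3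
end

section
/- For the Kodaira model, the t-Gauduchon scalar curvature is given by scal^t = (t − 1)·((α² + β²)r² + v²)³/(r⁴v⁴) for every t ∈ ℝ, where scal^t := 2(ρ^{t,(2)}(e₀,e₁) + ρ^{t,(2)}(e₂,e₃)) with ρ^{t,(2)}(X, Y) := ⟨(Ω^t(e₀,e₁) + Ω^t(e₂,e₃))X, Y⟩ and Ω^t(X,Y) := −[A^t(X),A^t(Y)] − A^t(μ(X,Y)). In particular, scal^t = 0 if and only if t = 1 (the Chern connection). -/
open scoped RealInnerProductSpace

set_option maxHeartbeats 4000000 in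
/-- For the Kodaira model, the `t`-Gauduchon scalar curvature is
`scal^t = (t − 1)((α² + β²)r² + v²)³/(r⁴v⁴)` for every `t`, where
`scal^t = 2(ρ^{t,(2)}(e₀,e₁) + ρ^{t,(2)}(e₂,e₃))` with
`ρ^{t,(2)}(X,Y) = ⟨(Ω^t(e₀,e₁) + Ω^t(e₂,e₃))X, Y⟩` and
`Ω^t(X,Y) = −[A^t(X),A^t(Y)] − A^t(μ(X,Y))`; in particular `scal^t = 0 ↔ t = 1`. -/
theorem stmt_17 (r v α β : ℝ) (hr : 0 < r) (hv : 0 < v)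
    (μ : EuclideanSpace ℝ (Fin 4) →ₗ[ℝ]
      EuclideanSpace ℝ (Fin 4) →ₗ[ℝ] EuclideanSpace ℝ (Fin 4))
    (hμalt : ∀ X, μ X X = 0)
    (h01 : μ (e4 0) (e4 1) =
      (α / r) • e4 0 - (β / r) • e4 1 - (v / r ^ 2) • e4 3)
    (h02 : μ (e4 0) (e4 2) =
      -(α ^ 2 / v) • e4 0 + (α * β / v) • e4 1 + (α / r) • e4 3)
    (h03 : μ (e4 0) (e4 3) =
      -(α * β / v) • e4 0 + (β ^ 2 / v) • e4 1 + (β / r) • e4 3)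
    (h12 : μ (e4 1) (e4 2) =
      (α * β / v) • e4 0 - (β ^ 2 / v) • e4 1 - (β / r) • e4 3)
    (h13 : μ (e4 1) (e4 3) =
      -(α ^ 2 / v) • e4 0 + (α * β / v) • e4 1 + (α / r) • e4 3)
    (h23 : μ (e4 2) (e4 3) =
      ((α ^ 2 + β ^ 2) * α * r / v ^ 2) • e4 0
        - ((α ^ 2 + β ^ 2) * β * r / v ^ 2) • e4 1
        - ((α ^ 2 + β ^ 2) / v) • e4 3)
    (I : EuclideanSpace ℝ (Fin 4) →ₗ[ℝ] EuclideanSpace ℝ (Fin 4))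
    (hI0 : I (e4 0) = e4 1) (hI1 : I (e4 1) = -e4 0)
    (hI2 : I (e4 2) = e4 3) (hI3 : I (e4 3) = -e4 2)
    -- the Levi-Civita operator `S^μ`
    (S : EuclideanSpace ℝ (Fin 4) →
      (EuclideanSpace ℝ (Fin 4) →ₗ[ℝ] EuclideanSpace ℝ (Fin 4)))
    (hS : ∀ X Y Z, ⟪S X Y, Z⟫ =
      -(1 / 2) * ⟪μ X Y, Z⟫ - (1 / 2) * ⟪μ Z X, Y⟫ - (1 / 2) * ⟪μ Z Y, X⟫)
    -- the `3`-form `F^μ`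
    (F : EuclideanSpace ℝ (Fin 4) → EuclideanSpace ℝ (Fin 4) →
      EuclideanSpace ℝ (Fin 4) → ℝ)
    (hF : ∀ X Y Z, F X Y Z =
      -⟪μ (I X) (I Y), Z⟫ - ⟪μ (I Y) (I Z), X⟫ - ⟪μ (I Z) (I X), Y⟫)
    -- the Gauduchon operator `A^t` (integrable case)
    (A : ℝ → EuclideanSpace ℝ (Fin 4) →
      (EuclideanSpace ℝ (Fin 4) →ₗ[ℝ] EuclideanSpace ℝ (Fin 4)))
    (hA : ∀ (t : ℝ) (X Y Z : EuclideanSpace ℝ (Fin 4)),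
      ⟪A t X Y, Z⟫ = ⟪S X Y, Z⟫ + ((t + 1) / 4) * F X (I Y) (I Z)
        + ((t - 1) / 4) * F X Y Z) :
    let Ω : ℝ → EuclideanSpace ℝ (Fin 4) → EuclideanSpace ℝ (Fin 4) →
        (EuclideanSpace ℝ (Fin 4) →ₗ[ℝ] EuclideanSpace ℝ (Fin 4)) :=
      fun t X Y => -((A t X) ∘ₗ (A t Y) - (A t Y) ∘ₗ (A t X)) - A t (μ X Y)
    let ρ₂ : ℝ → EuclideanSpace ℝ (Fin 4) → EuclideanSpace ℝ (Fin 4) → ℝ :=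
      fun t X Y => ⟪(Ω t (e4 0) (e4 1) + Ω t (e4 2) (e4 3)) X, Y⟫
    let scal : ℝ → ℝ :=
      fun t => 2 * (ρ₂ t (e4 0) (e4 1) + ρ₂ t (e4 2) (e4 3))
    ∀ t : ℝ,
      scal t = (t - 1) * ((α ^ 2 + β ^ 2) * r ^ 2 + v ^ 2) ^ 3 / (r ^ 4 * v ^ 4) ∧
      (scal t = 0 ↔ t = 1) := by
  intro Ω ρ₂ scal t
  have hr' : r ≠ 0 := hr.ne'
  have hv' : v ≠ 0 := hv.ne'
  have he : ∀ i j : Fin 4, (⟪e4 i, e4 j⟫ : ℝ) = if i = j then 1 else 0 := by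
    intro i j
    simp [e4, EuclideanSpace.inner_single_left, EuclideanSpace.single_apply, eq_comm]
  have hu : ∀ u : EuclideanSpace ℝ (Fin 4),
      u = ⟪u, e4 0⟫ • e4 0 + ⟪u, e4 1⟫ • e4 1 + ⟪u, e4 2⟫ • e4 2 + ⟪u, e4 3⟫ • e4 3 := by
    intro u
    ext i
    fin_cases i <;>
      simp [e4, EuclideanSpace.single_apply, real_inner_comm,
        EuclideanSpace.inner_single_left, EuclideanSpace.inner_single_right]
  have hanti : ∀ X Y, μ Y X = -μ X Y := by
    intro X Y
    have h := hμalt (X + Y)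
    simp only [map_add, LinearMap.add_apply, hμalt, zero_add, add_zero] at h
    exact eq_neg_of_add_eq_zero_left h
  have h10 : μ (e4 1) (e4 0) =
      -((α / r) • e4 0 - (β / r) • e4 1 - (v / r ^ 2) • e4 3) := by
    rw [hanti, h01]
  have h20 : μ (e4 2) (e4 0) =
      -(-(α ^ 2 / v) • e4 0 + (α * β / v) • e4 1 + (α / r) • e4 3) := by
    rw [hanti, h02]
  have h30 : μ (e4 3) (e4 0) =
      -(-(α * β / v) • e4 0 + (β ^ 2 / v) • e4 1 + (β / r) • e4 3) := by
    rw [hanti, h03]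
  have h21 : μ (e4 2) (e4 1) =
      -((α * β / v) • e4 0 - (β ^ 2 / v) • e4 1 - (β / r) • e4 3) := by
    rw [hanti, h12]
  have h31 : μ (e4 3) (e4 1) =
      -(-(α ^ 2 / v) • e4 0 + (α * β / v) • e4 1 + (α / r) • e4 3) := by
    rw [hanti, h13]
  have h32 : μ (e4 3) (e4 2) =
      -(((α ^ 2 + β ^ 2) * α * r / v ^ 2) • e4 0
        - ((α ^ 2 + β ^ 2) * β * r / v ^ 2) • e4 1
        - ((α ^ 2 + β ^ 2) / v) • e4 3) := by
    rw [hanti, h23]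
  have h00 := hμalt (e4 0)
  have h11 := hμalt (e4 1)
  have h22 := hμalt (e4 2)
  have h33 := hμalt (e4 3)
  have hcomp : ∀ X Y Z W : EuclideanSpace ℝ (Fin 4),
      ⟪A t X (A t Y Z), W⟫ =
        ⟪A t Y Z, e4 0⟫ * ⟪A t X (e4 0), W⟫ + ⟪A t Y Z, e4 1⟫ * ⟪A t X (e4 1), W⟫
        + ⟪A t Y Z, e4 2⟫ * ⟪A t X (e4 2), W⟫
        + ⟪A t Y Z, e4 3⟫ * ⟪A t X (e4 3), W⟫ := by
    intro X Y Z W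
    conv_lhs => rw [hu (A t Y Z)]
    simp only [map_add, map_smul, inner_add_left, real_inner_smul_left]
  have main : scal t =
      (t - 1) * ((α ^ 2 + β ^ 2) * r ^ 2 + v ^ 2) ^ 3 / (r ^ 4 * v ^ 4) := by
    simp only [scal, ρ₂, Ω, LinearMap.add_apply, LinearMap.sub_apply,
      LinearMap.neg_apply, LinearMap.comp_apply, inner_add_left, inner_sub_left,
      inner_neg_left]
    simp only [hcomp]
    simp only [hA, hS, hF]
    simp only [h01, h02, h03, h12, h13, h23, h10, h20, h30, h21, h31, h32,
      h00, h11, h22, h33, hI0, hI1, hI2, hI3, map_add, map_sub, map_smul, map_neg,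
      map_zero, LinearMap.add_apply, LinearMap.sub_apply, LinearMap.neg_apply,
      LinearMap.smul_apply, LinearMap.zero_apply, inner_add_left, inner_sub_left,
      inner_neg_left, real_inner_smul_left, inner_add_right, inner_sub_right,
      inner_neg_right, real_inner_smul_right, inner_zero_left, inner_zero_right,
      smul_add, smul_sub, smul_neg, neg_add, neg_sub, neg_neg]
    simp only [he, Fin.reduceEq, reduceIte]
    field_simp
    ring
  refine ⟨main, ?_⟩
  have hden : r ^ 4 * v ^ 4 ≠ 0 := by positivity
  have hnum : ((α ^ 2 + β ^ 2) * r ^ 2 + v ^ 2) ^ 3 ≠ 0 := by positivity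
  rw [main, div_eq_zero_iff, or_iff_left hden, mul_eq_zero, or_iff_left hnum,
    sub_eq_zero]
end
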